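/- If A ⊆ ℕ^ℕ is a game whose winner is decided at a finite stage, i.e., for every x ∈ ℕ^ℕ there exists n ∈ ℕ such that either 𝒪(x↾n) ⊆ A or 𝒪(x↾n) ⊆ ℕ^ℕ \ A (equivalently, A is clopen in the product topology on ℕ^ℕ with ℕ discrete), then the Gale–Stewart game with payoff set A is determined. -/
import Mathlib


/-- The finite position given by the first `n` moves of the infinite play `x`. -/
def position (x : ℕ → ℕ) (n : ℕ) : List ℕ := List.ofFn fun i : Fin n => x i.val

/-- `x` is an infinite play in which player I (moving at even indices) follows
the strategy `σ`, i.e. each even-indexed move is the one `σ` assigns to the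
current finite position. Player II's moves are arbitrary. -/
def FollowsI (σ : List ℕ → ℕ) (x : ℕ → ℕ) : Prop :=
  ∀ n : ℕ, Even n → x n = σ (position x n)

/-- `x` is an infinite play in which player II (moving at odd indices) follows
the strategy `τ`. Player I's moves are arbitrary. -/
def FollowsII (τ : List ℕ → ℕ) (x : ℕ → ℕ) : Prop :=
  ∀ n : ℕ, Odd n → x n = τ (position x n)

/-- `σ` is a winning strategy for player I in the Gale–Stewart game with payoff
set `A`: every play in which I follows `σ` lands in `A`. -/
def WinningStratI (A : Set (ℕ → ℕ)) (σ : List ℕ → ℕ) : Prop :=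
  ∀ x : ℕ → ℕ, FollowsI σ x → x ∈ A

/-- `τ` is a winning strategy for player II in the Gale–Stewart game with payoff
set `A`: every play in which II follows `τ` avoids `A`. -/
def WinningStratII (A : Set (ℕ → ℕ)) (τ : List ℕ → ℕ) : Prop :=
  ∀ x : ℕ → ℕ, FollowsII τ x → x ∉ A

/-- The Gale–Stewart game with payoff set `A` is determined: one of the two
players has a winning strategy. -/
def Determined (A : Set (ℕ → ℕ)) : Prop :=
  (∃ σ, WinningStratI A σ) ∨ (∃ τ, WinningStratII A τ)

/-- The basic open set `𝒪(s)` of all infinite sequences extending the finite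
sequence `s`. -/
def basicOpen (s : List ℕ) : Set (ℕ → ℕ) :=
  {x | ∀ k (h : k < s.length), x k = s.get ⟨k, h⟩}

section Aux

/-- Player I can force the play into `A` from position `p`. -/
inductive WinsI (A : Set (ℕ → ℕ)) : List ℕ → Prop
  | base (p : List ℕ) : basicOpen p ⊆ A → WinsI A p
  | moveI (p : List ℕ) (a : ℕ) : Even p.length → WinsI A (p ++ [a]) → WinsI A p
  | moveII (p : List ℕ) : Odd p.length → (∀ a, WinsI A (p ++ [a])) → WinsI A p

/-- Player II can force the play into `Aᶜ` from position `p`. -/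
inductive WinsII (A : Set (ℕ → ℕ)) : List ℕ → Prop
  | base (p : List ℕ) : basicOpen p ⊆ Aᶜ → WinsII A p
  | moveII (p : List ℕ) (a : ℕ) : Odd p.length → WinsII A (p ++ [a]) → WinsII A p
  | moveI (p : List ℕ) : Even p.length → (∀ a, WinsII A (p ++ [a])) → WinsII A p

lemma basicOpen_nonempty (p : List ℕ) : (basicOpen p).Nonempty :=
  ⟨fun i => if h : i < p.length then p.get ⟨i, h⟩ else 0, fun k h => dif_pos h⟩

lemma basicOpen_append (p : List ℕ) (a : ℕ) : basicOpen (p ++ [a]) ⊆ basicOpen p := by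
  intro x hx k hk
  have h' : k < (p ++ [a]).length := by simp; omega
  have := hx k h'
  simp only [List.get_eq_getElem] at this ⊢
  rw [this, List.getElem_append_left]

lemma position_zero (x : ℕ → ℕ) : position x 0 = [] := rfl

lemma position_length (x : ℕ → ℕ) (n : ℕ) : (position x n).length = n := by
  simp [position]

lemma position_succ (x : ℕ → ℕ) (n : ℕ) :
    position x (n + 1) = position x n ++ [x n] := by
  rw [position, List.ofFn_succ', List.concat_eq_append]
  simp [position, Fin.last]

lemma mem_basicOpen_position (x : ℕ → ℕ) (n : ℕ) : x ∈ basicOpen (position x n) := by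
  intro k hk
  simp [position]

lemma not_winsI_of_subset_compl {A : Set (ℕ → ℕ)} {p : List ℕ}
    (hp : basicOpen p ⊆ Aᶜ) : ¬ WinsI A p := by
  intro hw
  induction hw with
  | base q hq =>
      obtain ⟨x, hx⟩ := basicOpen_nonempty q
      exact hp hx (hq hx)
  | moveI q a _ _ ih => exact ih fun y hy => hp (basicOpen_append q a hy)
  | moveII q _ _ ih => exact ih 0 fun y hy => hp (basicOpen_append q 0 hy)

lemma not_winsII_of_subset {A : Set (ℕ → ℕ)} {p : List ℕ}
    (hp : basicOpen p ⊆ A) : ¬ WinsII A p := by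
  intro hw
  induction hw with
  | base q hq =>
      obtain ⟨x, hx⟩ := basicOpen_nonempty q
      exact hq hx (hp hx)
  | moveII q a _ _ ih => exact ih fun y hy => hp (basicOpen_append q a hy)
  | moveI q _ _ ih => exact ih 0 fun y hy => hp (basicOpen_append q 0 hy)

lemma not_winsI_and_winsII {A : Set (ℕ → ℕ)} {p : List ℕ}
    (h2 : WinsII A p) (h1 : WinsI A p) : False := by
  induction h2 with
  | base q hq => exact not_winsI_of_subset_compl hq h1
  | moveII q a hodd _ ih =>
      cases h1 with
      | base _ hq => exact ih (WinsI.base _ fun y hy => hq (basicOpen_append q a hy))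
      | moveI _ b heven _ => exact (Nat.not_even_iff_odd.mpr hodd) heven
      | moveII _ _ hall => exact ih (hall a)
  | moveI q heven _ ih =>
      cases h1 with
      | base _ hq => exact ih 0 (WinsI.base _ fun y hy => hq (basicOpen_append q 0 hy))
      | moveI _ b _ hb => exact ih b hb
      | moveII _ hodd _ => exact (Nat.not_even_iff_odd.mpr hodd) heven

open Classical in
/-- The non-losing strategy for player II. -/
noncomputable def tauStrat (A : Set (ℕ → ℕ)) : List ℕ → ℕ := fun p =>
  if h : ∃ a, ¬ WinsI A (p ++ [a]) then h.choose else 0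

open Classical in
/-- The non-losing strategy for player I. -/
noncomputable def sigmaStrat (A : Set (ℕ → ℕ)) : List ℕ → ℕ := fun p =>
  if h : ∃ a, ¬ WinsII A (p ++ [a]) then h.choose else 0

lemma maintain_II {A : Set (ℕ → ℕ)} (h0 : ¬ WinsI A []) {x : ℕ → ℕ}
    (hx : FollowsII (tauStrat A) x) (n : ℕ) : ¬ WinsI A (position x n) := by
  induction n with
  | zero => simpa [position_zero] using h0
  | succ n ih =>
      rw [position_succ]
      rcases Nat.even_or_odd n with he | ho
      · -- player I moved; all moves keep ¬WinsI
        intro hw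
        exact ih (WinsI.moveI _ (x n) (by rw [position_length]; exact he) hw)
      · -- player II moved following tau
        have hne : ¬ ∀ a, WinsI A (position x n ++ [a]) := by
          intro hall
          exact ih (WinsI.moveII _ (by rw [position_length]; exact ho) hall)
        push_neg at hne
        have hx' := hx n ho
        rw [hx']
        unfold tauStrat
        rw [dif_pos hne]
        exact hne.choose_spec

lemma maintain_I {A : Set (ℕ → ℕ)} (h0 : ¬ WinsII A []) {x : ℕ → ℕ}
    (hx : FollowsI (sigmaStrat A) x) (n : ℕ) : ¬ WinsII A (position x n) := by
  induction n with
  | zero => simpa [position_zero] using h0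
  | succ n ih =>
      rw [position_succ]
      rcases Nat.even_or_odd n with he | ho
      · have hne : ¬ ∀ a, WinsII A (position x n ++ [a]) := by
          intro hall
          exact ih (WinsII.moveI _ (by rw [position_length]; exact he) hall)
        push_neg at hne
        have hx' := hx n he
        rw [hx']
        unfold sigmaStrat
        rw [dif_pos hne]
        exact hne.choose_spec
      · intro hw
        exact ih (WinsII.moveII _ (x n) (by rw [position_length]; exact ho) hw)

end Aux

/-- If the winner of the game with payoff `A` is decided at a finite stage, i.e.
for every `x` there is an `n` with `𝒪(x↾n) ⊆ A` or `𝒪(x↾n) ⊆ Aᶜ` (equivalently,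
`A` is clopen), then the game with payoff `A` is determined. -/
theorem clopen_determined (A : Set (ℕ → ℕ))
    (h : ∀ x : ℕ → ℕ, ∃ n : ℕ, basicOpen (position x n) ⊆ A ∨ basicOpen (position x n) ⊆ Aᶜ) :
    Determined A := by
  by_cases hI : WinsI A []
  · -- Player I wins
    left
    refine ⟨sigmaStrat A, fun x hx => ?_⟩
    have h0 : ¬ WinsII A [] := fun hw => not_winsI_and_winsII hw hI
    obtain ⟨n, hn | hn⟩ := h x
    · exact hn (mem_basicOpen_position x n)
    · exact absurd (WinsII.base _ hn) (maintain_I h0 hx n)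
  · -- Player II wins
    right
    refine ⟨tauStrat A, fun x hx hxA => ?_⟩
    obtain ⟨n, hn | hn⟩ := h x
    · exact maintain_II hI hx n (WinsI.base _ hn)
    · exact hn (mem_basicOpen_position x n) hxA
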